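/- arXiv:1911.08851 — 4 statements merged into one kernel-verified Lean document; each statement's English description precedes it below -/
import Mathlib

section
/- For every integer m ≥ 1, the double sum ∑_{l=0}^{2m} (-1)^l (2m+1-l) · ∑_{j=m-l}^{2m-l} C(2m-l, j) · C(m+1, m-j) · C(m+1, l+j-m) equals m+1, where binomial coefficients C(a,b) are taken to be 0 when b < 0 or b > a. -/
def C (a b : ℤ) : ℤ := if 0 ≤ b ∧ b ≤ a then ((a.toNat).choose b.toNat : ℤ) else 0

lemma C_of_neg {a b : ℤ} (h : b < 0) : C a b = 0 := by
  rw [C, if_neg (by omega)]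

lemma C_of_gt {a b : ℤ} (h : a < b) : C a b = 0 := by
  rw [C, if_neg (by omega)]

lemma C_zero {a : ℤ} (h : 0 ≤ a) : C a 0 = 1 := by
  rw [C, if_pos ⟨le_refl 0, h⟩]; simp

lemma C_natCast (a b : ℕ) : C (a : ℤ) (b : ℤ) = (a.choose b : ℤ) := by
  rw [C]
  by_cases h : b ≤ a
  · rw [if_pos ⟨by positivity, by exact_mod_cast h⟩]; simp
  · rw [if_neg (by omega), Nat.choose_eq_zero_of_lt (by omega)]; simp

lemma C_pascal {a : ℤ} (b : ℤ) (ha : 1 ≤ a) : C a b = C (a-1) (b-1) + C (a-1) b := by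
  rcases lt_trichotomy b 0 with hb | hb | hb
  · rw [C_of_neg hb, C_of_neg (by omega), C_of_neg hb]; ring
  · subst hb
    rw [C_zero (by omega), C_of_neg (by omega), C_zero (by omega)]; ring
  · obtain ⟨k, hk⟩ : ∃ k : ℕ, a = (k : ℤ) + 1 := ⟨(a-1).toNat, by omega⟩
    obtain ⟨n, hn⟩ : ∃ n : ℕ, b = (n : ℤ) + 1 := ⟨(b-1).toNat, by omega⟩
    subst hk hn
    rw [show (k:ℤ) + 1 - 1 = (k:ℤ) by ring, show (n:ℤ) + 1 - 1 = (n:ℤ) by ring,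
      show (k:ℤ) + 1 = ((k+1 : ℕ) : ℤ) by push_cast; ring,
      show (n:ℤ) + 1 = ((n+1 : ℕ) : ℤ) by push_cast; ring,
      C_natCast, C_natCast, C_natCast, Nat.choose_succ_succ]
    push_cast; ring

lemma C_symm (a b : ℤ) : C a b = C a (a - b) := by
  rw [C, C]
  by_cases h : 0 ≤ b ∧ b ≤ a
  · rw [if_pos h, if_pos ⟨by omega, by omega⟩]
    have h2 : (a - b).toNat = a.toNat - b.toNat := by omega
    rw [h2, Nat.choose_symm (by omega)]
  · rw [if_neg h, if_neg (by omega)]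

lemma C_absorb (a b : ℤ) : (a+1) * C a b = (b+1) * C (a+1) (b+1) := by
  rcases lt_trichotomy b (-1) with hb | hb | hb
  · rw [C_of_neg (by omega), C_of_neg (by omega)]; ring
  · subst hb; rw [C_of_neg (by omega)]; ring
  · rcases le_or_gt b a with hba | hba
    · obtain ⟨n, hn⟩ : ∃ n : ℕ, b = (n : ℤ) := ⟨b.toNat, by omega⟩
      obtain ⟨k, hk⟩ : ∃ k : ℕ, a = (k : ℤ) := ⟨a.toNat, by omega⟩
      subst hn hk
      rw [show (k:ℤ) + 1 = ((k+1 : ℕ) : ℤ) by push_cast; ring,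
        show (n:ℤ) + 1 = ((n+1 : ℕ) : ℤ) by push_cast; ring,
        C_natCast, C_natCast]
      have := Nat.add_one_mul_choose_eq k n
      push_cast [Nat.succ_eq_add_one] at this ⊢
      linarith [this]
    · rw [C_of_gt hba, C_of_gt (by omega)]; ring

lemma alt_sum (r : ℕ) : ∀ x t : ℤ, (r : ℤ) ≤ x →
    ∑ s ∈ Finset.range (r+1), (-1:ℤ)^s * C (r : ℤ) (s : ℤ) * C (x - s) t
      = C (x - r) (t - r) := by
  induction r with
  | zero =>
    intro x t _
    simp [Finset.sum_range_one, C_zero (show (0:ℤ) ≤ 0 by omega)]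
  | succ r ih =>
    intro x t hx
    have hx' : (r : ℤ) + 1 ≤ x := by push_cast at hx; omega
    have step : ∀ s ∈ Finset.range (r+2), (-1:ℤ)^s * C ((r+1 : ℕ) : ℤ) (s : ℤ) * C (x - s) t
        = (-1:ℤ)^s * C (r : ℤ) (s : ℤ) * C (x - s) t
          + (-1:ℤ)^s * C (r : ℤ) ((s : ℤ) - 1) * C (x - s) t := by
      intro s _
      rw [show ((r+1 : ℕ) : ℤ) = (r : ℤ) + 1 by push_cast; ring,
        C_pascal (s : ℤ) (by omega), show (r:ℤ) + 1 - 1 = (r:ℤ) by ring]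
      ring
    rw [Finset.sum_congr rfl step, Finset.sum_add_distrib]
    have hA : ∑ s ∈ Finset.range (r+1+1), (-1:ℤ)^s * C (r : ℤ) (s : ℤ) * C (x - s) t
        = ∑ s ∈ Finset.range (r+1), (-1:ℤ)^s * C (r : ℤ) (s : ℤ) * C (x - s) t := by
      rw [Finset.sum_range_succ, C_of_gt (by push_cast; omega)]
      ring
    have hB : ∑ s ∈ Finset.range (r+1+1), (-1:ℤ)^s * C (r : ℤ) ((s : ℤ) - 1) * C (x - s) t
        = -∑ s ∈ Finset.range (r+1), (-1:ℤ)^s * C (r : ℤ) (s : ℤ) * C (x - s - 1) t := by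
      rw [Finset.sum_range_succ']
      have h0 : (-1:ℤ)^(0:ℕ) * C (r : ℤ) (((0:ℕ) : ℤ) - 1) * C (x - ((0:ℕ) : ℤ)) t = 0 := by
        rw [C_of_neg (by omega)]; ring
      rw [h0, add_zero, ← Finset.sum_neg_distrib]
      refine Finset.sum_congr rfl fun s _ => ?_
      rw [show ((s+1 : ℕ) : ℤ) = (s : ℤ) + 1 by push_cast; ring,
        show (s:ℤ) + 1 - 1 = (s:ℤ) by ring, show x - ((s:ℤ)+1) = x - s - 1 by ring]
      ring
    rw [hA, hB, ← sub_eq_add_neg, ← Finset.sum_sub_distrib]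
    have key : ∀ s ∈ Finset.range (r+1),
        (-1:ℤ)^s * C (r:ℤ) (s:ℤ) * C (x - s) t - (-1:ℤ)^s * C (r:ℤ) (s:ℤ) * C (x - s - 1) t
          = (-1:ℤ)^s * C (r:ℤ) (s:ℤ) * C ((x-1) - s) (t-1) := by
      intro s hs
      simp only [Finset.mem_range] at hs
      rw [C_pascal t (show 1 ≤ x - (s:ℤ) by omega),
        show (x-1) - (s:ℤ) = x - s - 1 by ring]
      ring
    rw [Finset.sum_congr rfl key, ih (x-1) (t-1) (by omega)]
    congr 1 <;> push_cast <;> ring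


def F (m i l : ℕ) : ℤ :=
  (-1)^l * (2*(m:ℤ)+1-l) *
    (C (2*(m:ℤ)-l) ((m:ℤ)-l+i) * (C ((m:ℤ)+1) ((l:ℤ)-i) * C ((m:ℤ)+1) (i:ℤ)))

theorem stmt_1 (m : ℕ) (hm : 1 ≤ m) :
    ∑ l ∈ Finset.range (2 * m + 1),
      (-1 : ℤ) ^ l * (2 * (m : ℤ) + 1 - l) *
        ∑ j ∈ Finset.Icc ((m : ℤ) - l) (2 * (m : ℤ) - l),
          C (2 * (m : ℤ) - l) j * C ((m : ℤ) + 1) ((m : ℤ) - j) *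
            C ((m : ℤ) + 1) ((l : ℤ) + j - m)
      = (m : ℤ) + 1 := by
  have h1 : ∀ l ∈ Finset.range (2*m+1),
      (-1 : ℤ) ^ l * (2 * (m : ℤ) + 1 - l) *
        ∑ j ∈ Finset.Icc ((m : ℤ) - l) (2 * (m : ℤ) - l),
          C (2 * (m : ℤ) - l) j * C ((m : ℤ) + 1) ((m : ℤ) - j) *
            C ((m : ℤ) + 1) ((l : ℤ) + j - m)
      = ∑ i ∈ Finset.range (m+1), F m i l := by
    intro l _
    rw [Int.Icc_eq_finset_map, Finset.sum_map,
      show (2*(m:ℤ) - l + 1 - ((m:ℤ) - l)).toNat = m + 1 by omega, Finset.mul_sum]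
    refine Finset.sum_congr rfl fun i _ => ?_
    simp only [Function.Embedding.trans_apply, Nat.castEmbedding_apply,
      addLeftEmbedding_apply, F]
    rw [show (m:ℤ) - ((m:ℤ) - l + i) = (l:ℤ) - i by ring,
      show (l:ℤ) + ((m:ℤ) - l + i) - m = (i:ℤ) by ring]
    ring
  rw [Finset.sum_congr rfl h1, Finset.sum_comm]
  have h2 : ∀ i ∈ Finset.range (m+1),
      ∑ l ∈ Finset.range (2*m+1), F m i l
      = (-1:ℤ)^i * C ((m:ℤ)+1) (i:ℤ) * ((m:ℤ) - i + 1) * C ((m:ℤ) - i) (-(i:ℤ)) := by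
    intro i hi
    simp only [Finset.mem_range] at hi
    have ha : ∑ l ∈ Finset.range (2*m+1+1), F m i l = ∑ l ∈ Finset.range (2*m+1), F m i l := by
      have h0 : F m i (2*m+1) = 0 := by
        simp only [F]
        rw [show 2*(m:ℤ)+1-((2*m+1 : ℕ) : ℤ) = 0 by push_cast; ring]
        ring
      rw [Finset.sum_range_succ, h0, add_zero]
    have hb : ∑ l ∈ Finset.range (2*m+1+1), F m i l = ∑ l ∈ Finset.Ico i (i+(m+2)), F m i l := by
      symm
      apply Finset.sum_subset
      · intro l hl
        simp only [Finset.mem_Ico] at hl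
        simp only [Finset.mem_range]
        omega
      · intro l hl hnot
        simp only [Finset.mem_range] at hl
        simp only [Finset.mem_Ico, not_and, not_lt] at hnot
        rcases lt_or_ge l i with h | h
        · simp only [F]
          rw [C_of_neg (show (l:ℤ) - i < 0 by omega)]
          ring
        · have h2 : i + (m+2) ≤ l := hnot h
          simp only [F]
          rw [C_of_gt (show (m:ℤ)+1 < (l:ℤ) - i by omega)]
          ring
    rw [← ha, hb, Finset.sum_Ico_eq_sum_range,
      show i + (m+2) - i = m + 2 by omega]
    have hd : ∀ s ∈ Finset.range (m+2), F m i (i+s)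
        = (-1:ℤ)^i * C ((m:ℤ)+1) (i:ℤ) * ((m:ℤ) - i + 1) *
          ((-1:ℤ)^s * C (((m+1:ℕ)):ℤ) (s:ℤ) * C ((2*(m:ℤ)+1-i) - s) ((m:ℤ) - i + 1)) := by
      intro s _
      simp only [F, pow_add]
      rw [show ((i+s : ℕ) : ℤ) = (i:ℤ) + s by push_cast; ring]
      rw [show 2*(m:ℤ) - ((i:ℤ)+s) = 2*(m:ℤ) - i - s by ring,
        show (m:ℤ) - ((i:ℤ)+s) + i = (m:ℤ) - s by ring,
        show (i:ℤ) + s - i = (s:ℤ) by ring,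
        show ((m+1:ℕ) : ℤ) = (m:ℤ) + 1 by push_cast; ring]
      rw [C_symm (2*(m:ℤ) - i - s) ((m:ℤ) - s),
        show 2*(m:ℤ) - i - s - ((m:ℤ) - s) = (m:ℤ) - i by ring]
      have habs := C_absorb (2*(m:ℤ) - i - s) ((m:ℤ) - i)
      rw [show 2*(m:ℤ) - i - s + 1 = 2*(m:ℤ) + 1 - i - s by ring] at habs
      linear_combination ((-1:ℤ)^i * (-1:ℤ)^s * C ((m:ℤ)+1) (s:ℤ) * C ((m:ℤ)+1) (i:ℤ)) * habs
    rw [Finset.sum_congr rfl hd, ← Finset.mul_sum,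
      alt_sum (m+1) (2*(m:ℤ)+1-i) ((m:ℤ) - i + 1) (by push_cast; omega),
      show 2*(m:ℤ)+1-i - ((m+1:ℕ) : ℤ) = (m:ℤ) - i by push_cast; ring,
      show (m:ℤ) - i + 1 - ((m+1:ℕ) : ℤ) = -(i:ℤ) by push_cast; ring]
  rw [Finset.sum_congr rfl h2]
  rw [Finset.sum_eq_single_of_mem 0 (by simp)]
  · norm_num
    rw [C_zero (show (0:ℤ) ≤ (m:ℤ)+1 by positivity), C_zero (show (0:ℤ) ≤ (m:ℤ) by positivity)]
    ring
  · intro i _ hne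
    rw [C_of_neg (show -(i:ℤ) < 0 by omega)]
    ring
end

section
/- For integers n ≥ 2 and m with 1 ≤ m ≤ n-1, and any integer a, the sum ∑_{l=0}^{n} (-1)^l (n+1-l)(m+1) · a^{n-l} · C(n-m+1, l-m) equals (-1)^m (m+1)(n-m+1)(a-1)^{n-m}, where C(a,b) = 0 for b < 0 or b > a. -/
lemma C_natCast_s4 (A B : ℕ) (h : B ≤ A) : C (A : ℤ) (B : ℤ) = (A.choose B : ℤ) := by
  have h' : (B : ℤ) ≤ (A : ℤ) := by exact_mod_cast h
  simp [C, h']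

lemma nat_key (N k : ℕ) (hk : k ≤ N) :
    (N + 1 - k) * (N + 1).choose k = (N + 1) * N.choose k := by
  have h1 : (N + 1).choose k = (N + 1).choose (N + 1 - k) := by
    rw [Nat.choose_symm (by omega)]
  have h2 : N.choose k = N.choose (N - k) := by rw [Nat.choose_symm hk]
  have h3 : N + 1 - k = (N - k) + 1 := by omega
  rw [h1, h2, h3]
  have h4 := Nat.add_one_mul_choose_eq N (N - k)
  rw [h4]; ring

lemma key (N : ℕ) (a : ℤ) :
    ∑ k ∈ Finset.range (N + 1),
      (-1 : ℤ) ^ k * ((N : ℤ) + 1 - k) * ((N + 1).choose k : ℤ) * a ^ (N - k)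
      = ((N : ℤ) + 1) * (a - 1) ^ N := by
  have hb : (a - 1) ^ N = ∑ k ∈ Finset.range (N + 1),
      (-1 : ℤ) ^ k * a ^ (N - k) * (N.choose k : ℤ) := by
    have := add_pow (-1 : ℤ) a N
    simpa [neg_add_eq_sub] using this
  rw [hb, Finset.mul_sum]
  apply Finset.sum_congr rfl
  intro k hk
  have hkN : k ≤ N := by simpa [Nat.lt_succ_iff] using hk
  have key' : ((N : ℤ) + 1 - k) * ((N + 1).choose k : ℤ) = ((N : ℤ) + 1) * (N.choose k : ℤ) := by
    have h := nat_key N k hkN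
    have hc : ((N : ℤ) + 1 - k) = ((N + 1 - k : ℕ) : ℤ) := by
      push_cast [Nat.cast_sub (by omega : k ≤ N + 1)]; ring
    rw [hc]
    exact_mod_cast congrArg (Nat.cast : ℕ → ℤ) h
  calc (-1 : ℤ) ^ k * ((N : ℤ) + 1 - k) * ((N + 1).choose k : ℤ) * a ^ (N - k)
      = (-1 : ℤ) ^ k * (((N : ℤ) + 1 - k) * ((N + 1).choose k : ℤ)) * a ^ (N - k) := by ring
    _ = (-1 : ℤ) ^ k * (((N : ℤ) + 1) * (N.choose k : ℤ)) * a ^ (N - k) := by rw [key']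
    _ = ((N : ℤ) + 1) * ((-1) ^ k * a ^ (N - k) * (N.choose k : ℤ)) := by ring

theorem stmt_4 (n m : ℕ) (hn : 2 ≤ n) (hm1 : 1 ≤ m) (hm2 : m ≤ n - 1) (a : ℤ) :
    ∑ l ∈ Finset.range (n + 1),
      (-1 : ℤ) ^ l * ((n : ℤ) + 1 - l) * ((m : ℤ) + 1) * a ^ (n - l) *
        C ((n : ℤ) - m + 1) ((l : ℤ) - m)
      = (-1 : ℤ) ^ m * ((m : ℤ) + 1) * ((n : ℤ) - m + 1) * (a - 1) ^ (n - m) := by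
  obtain ⟨N, rfl⟩ : ∃ N, n = m + N := ⟨n - m, by omega⟩
  have hN : 1 ≤ N := by omega
  set f : ℕ → ℤ := fun l =>
    (-1 : ℤ) ^ l * (((m + N : ℕ) : ℤ) + 1 - l) * ((m : ℤ) + 1) * a ^ (m + N - l) *
      C (((m + N : ℕ) : ℤ) - m + 1) ((l : ℤ) - m) with hf
  have hsub : ∑ l ∈ Finset.range (m + N + 1), f l = ∑ l ∈ Finset.Ico m (m + N + 1), f l := by
    refine (Finset.sum_subset ?_ ?_).symm
    · intro x hx
      simp only [Finset.mem_Ico, Finset.mem_range] at *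
      omega
    · intro x hx hx'
      simp only [Finset.mem_Ico, Finset.mem_range] at *
      have hxm : x < m := by omega
      have hz : C (((m + N : ℕ) : ℤ) - m + 1) ((x : ℤ) - m) = 0 := by
        rw [C, if_neg]
        push_neg
        intro h
        exfalso
        have : (x : ℤ) < m := by exact_mod_cast hxm
        omega
      calc f x = (-1 : ℤ) ^ x * (((m + N : ℕ) : ℤ) + 1 - x) * ((m : ℤ) + 1) * a ^ (m + N - x) *
          C (((m + N : ℕ) : ℤ) - m + 1) ((x : ℤ) - m) := rfl
        _ = 0 := by rw [hz]; ring
  rw [hsub, Finset.sum_Ico_eq_sum_range]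
  have hrange : m + N + 1 - m = N + 1 := by omega
  rw [hrange]
  have hterm : ∀ k ∈ Finset.range (N + 1), f (m + k)
      = (-1 : ℤ) ^ m * ((m : ℤ) + 1) *
        ((-1 : ℤ) ^ k * ((N : ℤ) + 1 - k) * ((N + 1).choose k : ℤ) * a ^ (N - k)) := by
    intro k hk
    have hkN : k ≤ N := by simpa [Nat.lt_succ_iff] using hk
    have hC : C (((m + N : ℕ) : ℤ) - m + 1) (((m + k : ℕ) : ℤ) - m)
        = ((N + 1).choose k : ℤ) := by
      have h1 : ((m + N : ℕ) : ℤ) - m + 1 = ((N + 1 : ℕ) : ℤ) := by push_cast; ring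
      have h2 : (((m + k : ℕ) : ℤ)) - m = ((k : ℕ) : ℤ) := by push_cast; ring
      rw [h1, h2, C_natCast_s4 _ _ (by omega)]
    have hexp : m + N - (m + k) = N - k := by omega
    simp only [hf, hC, hexp, pow_add]
    push_cast
    ring
  rw [Finset.sum_congr rfl hterm, ← Finset.mul_sum, key]
  rw [show m + N - m = N from by omega]
  push_cast
  ring
end

section
/- With g as above (parameters r,s,t ≥ 0 integers), g(a,b,0) = -2br(3b-2) - 2a(3b-4) - 2b(3a-4) - 8 for all integers a,b, and this is strictly negative for all integers a, b ≥ 1. -/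
/-- `g r s t a b c = c_3(J_1(a·D_0 + b·D_3 + c·D_5))` on
`Y = P_X(O ⊕ O(s·D_0' + t·D_3'))` over the Hirzebruch surface `X = P_{P^1}(O ⊕ O(r))`. -/
def g (r s t a b c : ℤ) : ℤ :=
  4*c^3*r*t^2 + 12*b*c^2*r*t + 8*c^3*s*t - 3*c^2*r*t^2 + 12*b^2*c*r + 12*b*c^2*s
    + 12*a*c^2*t - 6*b*c*r*t - 3*c^2*r*t - 6*c^2*s*t + 24*a*b*c - 6*b^2*r - 6*b*c*r
    - 6*b*c*s - 6*c^2*s - 6*a*c*t - 6*c^2*t + 2*c*r*t - 12*a*b - 12*a*c - 12*b*c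
    + 4*b*r + 4*c*s + 4*c*t + 8*a + 8*b + 8*c - 8

theorem stmt_14 (r s t : ℤ) (hr : 0 ≤ r) (hs : 0 ≤ s) (ht : 0 ≤ t) :
    (∀ a b : ℤ, g r s t a b 0 =
      -2 * b * r * (3 * b - 2) - 2 * a * (3 * b - 4) - 2 * b * (3 * a - 4) - 8) ∧
    (∀ a b : ℤ, 1 ≤ a → 1 ≤ b → g r s t a b 0 < 0) := by
  constructor
  · intro a b; simp only [g]; ring
  · intro a b ha hb
    simp only [g]
    nlinarith [mul_nonneg (mul_nonneg hr (by linarith : (0:ℤ) ≤ b)) (by linarith : (0:ℤ) ≤ 3*b-2), mul_pos (by linarith : (0:ℤ) < a) (by linarith : (0:ℤ) < b)]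
end

section
/- For integers r_1 ≥ 0 and r_1 ≤ r_2 with r_2 ≥ 0, and positive integers a, b: the quantity 2(b-1)((r_1+r_2)b(2b-1) + 3(a-1)(b-1) + 3ab) when b ≥ 2, or 3a + r_1 + r_2 when b = 1, equals 4 if and only if r_1 = 0, r_2 = 1, a = 1, b = 1. -/
theorem stmt_18 (r₁ r₂ a b : ℤ) (hr₁ : 0 ≤ r₁) (hr₁₂ : r₁ ≤ r₂) (hr₂ : 0 ≤ r₂)
    (ha : 1 ≤ a) (hb : 1 ≤ b) :
    (if b = 1 then 3 * a + r₁ + r₂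
     else 2 * (b - 1) * ((r₁ + r₂) * b * (2 * b - 1) + 3 * (a - 1) * (b - 1) + 3 * a * b))
      = 4 ↔ r₁ = 0 ∧ r₂ = 1 ∧ a = 1 ∧ b = 1 := by
  by_cases h : b = 1
  · simp only [h, if_true]
    constructor
    · intro he; exact ⟨by omega, by omega, by omega, trivial⟩
    · rintro ⟨h1, h2, h3, _⟩; omega
  · simp only [h, if_false]
    have hb2 : 2 ≤ b := by omega
    constructor
    · intro he
      exfalso
      nlinarith [mul_nonneg (mul_nonneg (by linarith : (0:ℤ) ≤ r₁ + r₂) (by linarith : (0:ℤ) ≤ b)) (by linarith : (0:ℤ) ≤ 2*b - 1),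
        mul_nonneg (by linarith : (0:ℤ) ≤ a - 1) (by linarith : (0:ℤ) ≤ b - 1),
        mul_le_mul (le_refl a) hb2 (by norm_num) (by linarith : (0:ℤ) ≤ a)]
    · rintro ⟨_, _, _, h4⟩; exact h4.elim
end
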